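/- Let n ≥ 1 and let F be a subset of a De Morgan lattice L. Then F is an n-prime filter on L (a filter whose complement is an n-ideal) if and only if there exists a homomorphism of De Morgan lattices h : L → (Fin n → Bool × Bool) such that F = {x : ∀ i, (h x i).1 = true}, i.e., F is the preimage of the designated set of the direct power (DM₁)ⁿ. -/

import Mathlib

/-- A De Morgan lattice: a distributive lattice with an antitone involution. -/
class DeMorgan (L : Type*) extends DistribLattice L where
  dneg : L → L
  dneg_dneg : ∀ x : L, dneg (dneg x) = x
  dneg_sup : ∀ x y : L, dneg (x ⊔ y) = dneg x ⊓ dneg y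

prefix:max "∼" => DeMorgan.dneg

section Defs

variable {α : Type*}

/-- An upward closed subset of a lattice. -/
def IsUpset [Lattice α] (F : Set α) : Prop :=
  ∀ ⦃x y : α⦄, x ∈ F → x ≤ y → y ∈ F

/-- A lattice filter: an upset closed under binary meets. -/
def IsLatFilter [Lattice α] (F : Set α) : Prop :=
  IsUpset F ∧ ∀ x y : α, x ∈ F → y ∈ F → x ⊓ y ∈ F

/-- An `n`-filter: an upset such that for every nonempty finite `Y`, if the meet of
every nonempty subset of `Y` of size at most `n` lies in `F`, then so does the meet of `Y`. -/
def IsNFilter [Lattice α] (n : ℕ) (F : Set α) : Prop :=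
  IsUpset F ∧ ∀ (Y : Finset α) (hY : Y.Nonempty),
    (∀ (X : Finset α) (hX : X.Nonempty), X ⊆ Y → X.card ≤ n → X.inf' hX id ∈ F) →
    Y.inf' hY id ∈ F

/-- A prime upset: `x ⊔ y ∈ F` implies `x ∈ F` or `y ∈ F`. -/
def IsPrimeUpset [Lattice α] (F : Set α) : Prop :=
  ∀ x y : α, x ⊔ y ∈ F → x ∈ F ∨ y ∈ F

/-- A downward closed subset of a lattice. -/
def IsDownset [Lattice α] (I : Set α) : Prop :=
  ∀ ⦃x y : α⦄, x ∈ I → y ≤ x → y ∈ I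

/-- A lattice ideal: a downset closed under binary joins. -/
def IsIdeal [Lattice α] (I : Set α) : Prop :=
  IsDownset I ∧ ∀ x y : α, x ∈ I → y ∈ I → x ⊔ y ∈ I

/-- An `n`-ideal: the order dual notion of an `n`-filter. -/
def IsNIdeal [Lattice α] (n : ℕ) (I : Set α) : Prop :=
  IsDownset I ∧ ∀ (Y : Finset α) (hY : Y.Nonempty),
    (∀ (X : Finset α) (hX : X.Nonempty), X ⊆ Y → X.card ≤ n → X.sup' hX id ∈ I) →
    Y.sup' hY id ∈ I

variable {L : Type*} [DeMorgan L]

/-- Almost complete upset: `x ∈ F` implies `x ⊓ (y ⊔ ∼y) ∈ F`. -/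
def AlmostComplete (F : Set L) : Prop := ∀ x ∈ F, ∀ y : L, x ⊓ (y ⊔ ∼y) ∈ F

/-- Complete upset: almost complete and nonempty. -/
def IsCompleteUpset (F : Set L) : Prop := AlmostComplete F ∧ F.Nonempty

/-- Almost consistent upset: `(x ⊓ ∼x) ⊔ y ∈ F` implies `y ∈ F`. -/
def AlmostConsistent (F : Set L) : Prop := ∀ x y : L, (x ⊓ ∼x) ⊔ y ∈ F → y ∈ F

/-- Consistent upset: almost consistent and not total. -/
def IsConsistentUpset (F : Set L) : Prop := AlmostConsistent F ∧ F ≠ Set.univ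

/-- Classical upset: complete and consistent. -/
def IsClassicalUpset (F : Set L) : Prop := IsCompleteUpset F ∧ IsConsistentUpset F

/-- Kalman upset. -/
def IsKalmanUpset (F : Set L) : Prop :=
  ∀ x y z u : L, ((x ⊓ ∼x) ⊓ z) ⊔ u ∈ F → ((y ⊔ ∼y) ⊓ z) ⊔ u ∈ F

/-- A homomorphism of De Morgan lattices. -/
def IsDMHom {L M : Type*} [DeMorgan L] [DeMorgan M] (h : L → M) : Prop :=
  (∀ x y : L, h (x ⊓ y) = h x ⊓ h y) ∧ (∀ x y : L, h (x ⊔ y) = h x ⊔ h y) ∧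
    ∀ x : L, h (∼x) = ∼(h x)

/-- The filter generated by all elements of the form `x ⊔ ∼x`. -/
def Fcomp (L : Type*) [DeMorgan L] : Set L :=
  {a | ∃ (s : Finset L) (hs : s.Nonempty), s.inf' hs (fun x => x ⊔ ∼x) ≤ a}

/-- The `n`-filter generated by a set. -/
def nFilterGen (n : ℕ) (U : Set L) : Set L :=
  ⋂₀ {F : Set L | IsNFilter n F ∧ U ⊆ F}

/-- `Comp U`. -/
def CompCl (U : Set L) : Set L := {x | ∃ a ∈ U, ∃ f ∈ Fcomp L, a ⊓ f ≤ x}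

/-- `Cons U`. -/
def ConsCl (U : Set L) : Set L := {x | ∃ f ∈ Fcomp L, ∼f ⊔ x ∈ U}

/-- A congruence of De Morgan lattices, as a binary relation. -/
def IsCongruence (θ : L → L → Prop) : Prop :=
  Equivalence θ ∧
  (∀ a b c d : L, θ a b → θ c d → θ (a ⊓ c) (b ⊓ d)) ∧
  (∀ a b c d : L, θ a b → θ c d → θ (a ⊔ c) (b ⊔ d)) ∧
  ∀ a b : L, θ a b → θ (∼a) (∼b)

end Defs

/-- The four-element De Morgan lattice `DM₁` on `Bool × Bool`. -/
instance : DeMorgan (Bool × Bool) :=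
  { (inferInstance : DistribLattice (Bool × Bool)) with
    dneg := fun p => (!p.2, !p.1)
    dneg_dneg := by decide
    dneg_sup := by decide }

/-- Powers of `DM₁`, with componentwise operations. -/
instance {ι : Type*} : DeMorgan (ι → Bool × Bool) :=
  { (inferInstance : DistribLattice (ι → Bool × Bool)) with
    dneg := fun f i => ∼(f i)
    dneg_dneg := fun f => funext fun i => DeMorgan.dneg_dneg (f i)
    dneg_sup := fun f g => funext fun i => DeMorgan.dneg_sup (f i) (g i) }


/-! A join lying in each of `n` prime filters has, for every one of them, a joinand in it, so an
intersection of `n` prime filters is `n`-prime; and a prime filter `P` gives the De Morgan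
homomorphism `x ↦ (x ∈ P, ∼x ∉ P)` into `DM₁`.

Conversely, let `F` be `n`-prime and let `Y` be a finite set with join in `F`, minimal with this
property and of largest possible size `m ≤ n`; then `F` is also `m`-prime. For `y ∈ Y` the elements
that can replace `y` in `Y` without the join leaving `F` form a prime filter containing `F`, and
these `m` filters intersect to `F`: a counterexample to either claim produces `m + 1` elements whose
join lies in `F` while the join of any `m` of them does not. -/

def IsPrimeFilter {α : Type*} [Lattice α] (P : Set α) : Prop :=
  IsLatFilter P ∧ IsPrimeUpset P

section PrimeFilter

variable {α ι : Type*} [Lattice α]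

theorem isPrimeFilter_univ : IsPrimeFilter (Set.univ : Set α) :=
  ⟨⟨fun _ _ _ _ => trivial, fun _ _ _ _ => trivial⟩, fun _ _ _ => Or.inl trivial⟩

theorem isPrimeFilter_empty : IsPrimeFilter (∅ : Set α) :=
  ⟨⟨fun _ _ h => h.elim, fun _ _ h => h.elim⟩, fun _ _ h => h.elim⟩

theorem isPrimeFilter_setOf_eq_true {f : α → Bool} (hinf : ∀ x y, f (x ⊓ y) = f x ⊓ f y)
    (hsup : ∀ x y, f (x ⊔ y) = f x ⊔ f y) : IsPrimeFilter {x | f x = true} := by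
  refine ⟨⟨fun x y hx hxy => ?_, fun x y hx hy => ?_⟩, fun x y hxy => ?_⟩
  · have h := hinf x y
    rw [inf_eq_left.mpr hxy, hx] at h
    simpa using h.symm
  · simp_all
  · simpa [hsup] using hxy

theorem IsLatFilter.inf_mem_iff {P : Set α} (hP : IsLatFilter P) {x y : α} :
    x ⊓ y ∈ P ↔ x ∈ P ∧ y ∈ P :=
  ⟨fun h => ⟨hP.1 h inf_le_left, hP.1 h inf_le_right⟩, fun h => hP.2 x y h.1 h.2⟩

theorem IsPrimeFilter.sup_mem_iff {P : Set α} (hP : IsPrimeFilter P) {x y : α} :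
    x ⊔ y ∈ P ↔ x ∈ P ∨ y ∈ P :=
  ⟨hP.2 x y, fun h => h.elim (hP.1.1 · le_sup_left) (hP.1.1 · le_sup_right)⟩

theorem isLatFilter_iInter {P : ι → Set α} (hP : ∀ i, IsLatFilter (P i)) :
    IsLatFilter (⋂ i, P i) := by
  simp only [IsLatFilter, IsUpset, Set.mem_iInter]
  exact ⟨fun x y hx hxy i => (hP i).1 (hx i) hxy, fun x y hx hy i => (hP i).2 x y (hx i) (hy i)⟩

theorem IsPrimeFilter.exists_mem_of_sup'_mem {P : Set α} (hP : IsPrimeFilter P) {Y : Finset ι}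
    (hY : Y.Nonempty) {f : ι → α} (h : Y.sup' hY f ∈ P) : ∃ y ∈ Y, f y ∈ P :=
  Finset.sup'_induction hY f (p := fun a => a ∈ P → ∃ y ∈ Y, f y ∈ P)
    (fun a ha b hb hab => (hP.2 a b hab).elim ha hb) (fun y hy hyP => ⟨y, hy, hyP⟩) h

theorem isNIdeal_compl_iInter [Fintype ι] [Nonempty ι] {n : ℕ} (hcard : Fintype.card ι ≤ n)
    {P : ι → Set α} (hP : ∀ i, IsPrimeFilter (P i)) : IsNIdeal n (⋂ i, P i)ᶜ := by
  classical
  refine ⟨fun x y hx hyx hy => hx ((isLatFilter_iInter fun i => (hP i).1).1 hy hyx),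
    fun Y hY hsmall hYF => ?_⟩
  rw [Set.mem_iInter] at hYF
  choose g hgY hgP using fun i => (hP i).exists_mem_of_sup'_mem hY (hYF i)
  have hX : (Finset.univ.image g).Nonempty := Finset.univ_nonempty.image g
  refine hsmall _ hX (by simpa [Finset.image_subset_iff] using hgY)
    (Finset.card_image_le.trans hcard) (Set.mem_iInter.mpr fun i => ?_)
  exact (hP i).1.1 (hgP i) (Finset.le_sup' id (Finset.mem_image_of_mem g (Finset.mem_univ i)))

theorem exists_fin_iInter_eq [Fintype ι] {n : ℕ} (hcard : Fintype.card ι ≤ n) {P : ι → Set α}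
    (hP : ∀ i, IsPrimeFilter (P i)) :
    ∃ Q : Fin n → Set α, (∀ j, IsPrimeFilter (Q j)) ∧ ⋂ j, Q j = ⋂ i, P i := by
  obtain ⟨e⟩ := Function.Embedding.nonempty_of_card_le (hcard.trans (Fintype.card_fin n).ge)
  refine ⟨Function.extend e P fun _ => Set.univ, fun j => ?_, ?_⟩
  · by_cases hj : ∃ i, e i = j
    · obtain ⟨i, rfl⟩ := hj
      rw [e.injective.extend_apply]
      exact hP i
    · rw [Function.extend_apply' _ _ _ hj]
      exact isPrimeFilter_univ
  · ext x
    simp only [Set.mem_iInter]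
    refine ⟨fun h i => by simpa [e.injective.extend_apply] using h (e i), fun h j => ?_⟩
    by_cases hj : ∃ i, e i = j
    · obtain ⟨i, rfl⟩ := hj
      simpa [e.injective.extend_apply] using h i
    · simp [Function.extend_apply' _ _ _ hj]

end PrimeFilter

section Decomposition

variable {α : Type*} [DistribLattice α] {F : Set α}

/-- The join of `Y` lies in `F`; unlike `Finset.sup'` this makes sense for `Y = ∅`, where it
says `F = univ`. -/
def SupMem (F : Set α) (Y : Finset α) : Prop :=
  upperBounds (Y : Set α) ⊆ F

def IsNPrimeUpset (n : ℕ) (F : Set α) : Prop :=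
  ∀ Y : Finset α, SupMem F Y → ∃ X ⊆ Y, X.card ≤ n ∧ SupMem F X

theorem IsNIdeal.isNPrimeUpset_of_compl {n : ℕ} (hF : IsNIdeal n Fᶜ) : IsNPrimeUpset n F := by
  intro Y hY
  rcases Y.eq_empty_or_nonempty with rfl | hne
  · exact ⟨∅, subset_rfl, by simp, by simpa using hY⟩
  by_contra! hsmall
  refine hF.2 Y hne (fun X hX hXY hXn hXF => hsmall X hXY hXn fun b hb => ?_)
    (hY fun y hy => Finset.le_sup' id hy)
  by_contra hbF
  exact hF.1 hbF (Finset.sup'_le hX id hb) hXF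

theorem IsNPrimeUpset.card_le_of_minimal {n : ℕ} (hF : IsNPrimeUpset n F) {Y : Finset α}
    (hY : Minimal (SupMem F) Y) : Y.card ≤ n := by
  obtain ⟨X, hXY, hXn, hX⟩ := hF Y hY.prop
  rwa [← hY.eq_of_le hX hXY]

/-- Any minimal set of largest size will do. -/
theorem IsNPrimeUpset.exists_minimal {n : ℕ} (hF : IsNPrimeUpset n F) {Y₀ : Finset α}
    (hY₀ : SupMem F Y₀) :
    ∃ Y : Finset α, Minimal (SupMem F) Y ∧
      Y.card ≤ n ∧ IsNPrimeUpset Y.card F := by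
  classical
  obtain ⟨Y₁, -, hY₁⟩ := exists_minimal_le_of_wellFoundedLT _ Y₀ hY₀
  obtain ⟨Y, hY, hcard⟩ :=
    Nat.findGreatest_spec (P := fun k => ∃ Y, Minimal (SupMem F) Y ∧ Y.card = k)
    (hF.card_le_of_minimal hY₁) ⟨Y₁, hY₁, rfl⟩
  refine ⟨Y, hY, hcard ▸ Nat.findGreatest_le n, fun Z hZ => ?_⟩
  obtain ⟨X, hXZ, hX⟩ := exists_minimal_le_of_wellFoundedLT _ Z hZ
  exact ⟨X, hXZ, hcard ▸ Nat.le_findGreatest (hF.card_le_of_minimal hX) ⟨X, hX, rfl⟩, hX.prop⟩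

/-- Pigeonhole: a subset of size `≤ n` of the values of `z` misses some index. -/
theorem IsNPrimeUpset.not_upperBounds_range_subset {ι : Type*} [Fintype ι] {n : ℕ}
    (hF : IsNPrimeUpset n F) (hcard : n < Fintype.card ι) {z : ι → α}
    (hz : ∀ i, ∃ b ∉ F, ∀ j ≠ i, z j ≤ b) : ¬ upperBounds (Set.range z) ⊆ F := by
  classical
  intro hrange
  obtain ⟨X, hXz, hXn, hX⟩ := hF (Finset.univ.image z) (by simpa [SupMem] using hrange)
  choose g hg using fun x : X => Finset.mem_image.mp (hXz x.2)
  obtain ⟨i, -, hi⟩ : ∃ i ∈ Finset.univ, i ∉ Finset.univ.image g := by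
    refine Finset.exists_mem_notMem_of_card_lt_card ?_
    calc (Finset.univ.image g).card ≤ X.card := Finset.card_image_le.trans (by simp)
      _ < _ := hXn.trans_lt hcard
  obtain ⟨b, hbF, hb⟩ := hz i
  refine hbF (hX fun x hx => ?_)
  exact (hg ⟨x, hx⟩).2.symm.trans_le
    (hb _ fun h => hi (h ▸ Finset.mem_image_of_mem g (Finset.mem_univ _)))

end Decomposition

section Exchange

variable {α : Type*} [DistribLattice α] {F : Set α} {Y : Finset α} {y : α}

theorem IsLatFilter.mem_of_sup_mem_of_inf_le (hF : IsLatFilter F) {b u v : α} (hu : b ⊔ u ∈ F)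
    (hv : b ⊔ v ∈ F) (huv : u ⊓ v ≤ b) : b ∈ F := by
  have h := hF.2 _ _ hu hv
  rw [← sup_inf_left] at h
  exact hF.1 h (sup_le le_rfl huv)

theorem SupMem.sup_mem_of_forall_ne_le (hY : SupMem F Y) {b : α}
    (hb : ∀ w ∈ Y, w ≠ y → w ≤ b) : b ⊔ y ∈ F := by
  refine hY fun w hw => ?_
  by_cases hwy : w = y
  · exact hwy ▸ le_sup_right
  · exact le_sup_of_le_left (hb w hw hwy)

theorem exists_notMem_of_minimal (hY : Minimal (SupMem F) Y)
    {w : α} (hw : w ∈ Y) : ∃ b ∉ F, ∀ v ∈ Y, v ≠ w → v ≤ b := by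
  classical
  obtain ⟨b, hb, hbF⟩ := Set.not_subset.mp (hY.not_prop_of_lt (Finset.erase_ssubset hw))
  exact ⟨b, hbF, fun v hv hvw => hb (by simp [hv, hvw])⟩

/-- The elements `x` such that replacing `y` by `x` in `Y` keeps the join in `F`. -/
def exchangeSet (F : Set α) (Y : Finset α) (y : α) : Set α :=
  {x | ∀ b, x ≤ b → (∀ w ∈ Y, w ≠ y → w ≤ b) → b ∈ F}

theorem subset_exchangeSet (hF : IsUpset F) : F ⊆ exchangeSet F Y y :=
  fun _ hx _ hxb _ => hF hx hxb

theorem isLatFilter_exchangeSet (hF : IsLatFilter F) : IsLatFilter (exchangeSet F Y y) := by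
  refine ⟨fun x x' hx hxx' b hb hbY => hx b (hxx'.trans hb) hbY, fun x x' hx hx' b hb hbY => ?_⟩
  have hbY' : ∀ u, ∀ w ∈ Y, w ≠ y → w ≤ b ⊔ u := fun u w hw hwy => le_sup_of_le_left (hbY w hw hwy)
  exact hF.mem_of_sup_mem_of_inf_le (hx _ le_sup_right (hbY' x)) (hx' _ le_sup_right (hbY' x')) hb

variable (hF : IsLatFilter F)
  (hY : Minimal (SupMem F) Y)
  (hYc : IsNPrimeUpset Y.card F)
include hF hY hYc

/-- If `x ⊔ x'` may replace `y` but neither `x` nor `x'` can, then the `Y.card + 1` elements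
`x ⊓ y`, `x' ⊓ y` and `Y \ {y}` have their join in `F` while no `Y.card` of them do. -/
theorem isPrimeUpset_exchangeSet (hy : y ∈ Y) : IsPrimeUpset (exchangeSet F Y y) := by
  classical
  intro x x' hxx'
  by_contra! hnot
  obtain ⟨b, hxb, hbY, hbF⟩ : ∃ b, x ≤ b ∧ (∀ w ∈ Y, w ≠ y → w ≤ b) ∧ b ∉ F := by
    simpa [exchangeSet] using hnot.1
  obtain ⟨b', hxb', hbY', hbF'⟩ : ∃ b, x' ≤ b ∧ (∀ w ∈ Y, w ≠ y → w ≤ b) ∧ b ∉ F := by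
    simpa [exchangeSet] using hnot.2
  let z : Option Y → α := fun o => o.elim (x' ⊓ y) fun w => if (w : α) = y then x ⊓ y else w
  refine hYc.not_upperBounds_range_subset (z := z) (by simp) (fun k => ?_) (fun d hd => ?_)
  · rcases k with _ | ⟨w, hw⟩
    · refine ⟨b, hbF, ?_⟩
      rintro (_ | ⟨v, hv⟩) hne
      · exact absurd rfl hne
      · by_cases hvy : v = y <;> simp [z, hvy, inf_le_left.trans hxb, hbY v hv]
    · by_cases hwy : w = y
      · subst hwy
        refine ⟨b', hbF', ?_⟩
        rintro (_ | ⟨v, hv⟩) hne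
        · exact inf_le_left.trans hxb'
        · have hvw : v ≠ w := fun h => hne (by simp [h])
          simp [z, hvw, hbY' v hv hvw]
      · obtain ⟨c, hcF, hc⟩ := exists_notMem_of_minimal hY hw
        have hyc : y ≤ c := hc y hy (Ne.symm hwy)
        refine ⟨c, hcF, ?_⟩
        rintro (_ | ⟨v, hv⟩) hne
        · exact inf_le_right.trans hyc
        · have hvw : v ≠ w := fun h => hne (by simp [h])
          by_cases hvy : v = y <;> simp [z, hvy, inf_le_right.trans hyc, hc v hv hvw]
  · have hdY : ∀ w ∈ Y, w ≠ y → w ≤ d := fun w hw hwy => by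
      simpa [z, hwy] using hd ⟨some ⟨w, hw⟩, rfl⟩
    refine hF.mem_of_sup_mem_of_inf_le (u := x ⊔ x') (v := y)
      (hxx' _ le_sup_right fun w hw hwy => le_sup_of_le_left (hdY w hw hwy))
      (hY.prop.sup_mem_of_forall_ne_le hdY) ?_
    rw [inf_sup_right]
    exact sup_le (by simpa [z] using hd ⟨some ⟨y, hy⟩, rfl⟩) (hd ⟨none, rfl⟩)

/-- If `a ∉ F` could replace every `y ∈ Y`, then the `Y.card + 1` elements `a ⊓ w` for `w ∈ Y` and
`c = ⨅ c_w`, with `c_w ∉ F` an upper bound of `Y \ {w}`, have their join in `F` while no `Y.card`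
of them do. -/
theorem iInter_exchangeSet_subset : ⋂ w : Y, exchangeSet F Y w ⊆ F := by
  classical
  intro a ha
  rw [Set.mem_iInter] at ha
  by_contra haF
  rcases Y.eq_empty_or_nonempty with rfl | hne
  · exact haF (hY.prop (by simp))
  choose c hcF hc using fun w : Y => exists_notMem_of_minimal hY w.2
  have huniv : (Finset.univ : Finset Y).Nonempty := Finset.univ_nonempty_iff.mpr hne.to_subtype
  let z : Option Y → α := fun o => o.elim (Finset.univ.inf' huniv c) fun w => a ⊓ w
  refine hYc.not_upperBounds_range_subset (z := z) (by simp) (fun k => ?_) (fun d hd => ?_)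
  · rcases k with _ | w
    · exact ⟨a, haF, by rintro (_ | w) hne; exacts [absurd rfl hne, inf_le_left]⟩
    · refine ⟨c w, hcF w, ?_⟩
      rintro (_ | v) hne
      · exact Finset.inf'_le c (Finset.mem_univ w)
      · exact inf_le_right.trans (hc w v v.2 fun h => hne (by rw [Subtype.ext h]))
  · have hdc : d = Finset.univ.inf' huniv fun w => d ⊔ c w := by
      rw [← Finset.inf'_sup_distrib_left]
      exact (sup_eq_left.mpr (hd ⟨none, rfl⟩)).symm
    rw [hdc]
    refine Finset.inf'_mem F (fun u hu v hv => hF.2 u v hu hv) _ _ _ fun w _ => ?_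
    have hcY : ∀ v ∈ Y, v ≠ w → v ≤ d ⊔ c w := fun v hv hvw => le_sup_of_le_right (hc w v hv hvw)
    exact hF.mem_of_sup_mem_of_inf_le (u := a) (v := w)
      (ha w _ le_sup_right fun v hv hvw => le_sup_of_le_left (hcY v hv hvw))
      (hY.prop.sup_mem_of_forall_ne_le hcY) (le_sup_of_le_left (hd ⟨some w, rfl⟩))

theorem iInter_exchangeSet : ⋂ w : Y, exchangeSet F Y w = F :=
  (iInter_exchangeSet_subset hF hY hYc).antisymm
    (Set.subset_iInter fun _ => subset_exchangeSet hF.1)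

end Exchange

theorem exists_iInter_eq_of_isNIdeal_compl {α : Type*} [DistribLattice α] {F : Set α}
    (hF : IsLatFilter F) {n : ℕ} (hn : 1 ≤ n) (hFc : IsNIdeal n Fᶜ) :
    ∃ P : Fin n → Set α, (∀ i, IsPrimeFilter (P i)) ∧ F = ⋂ i, P i := by
  rcases F.eq_empty_or_nonempty with rfl | ⟨f, hf⟩
  · have : Nonempty (Fin n) := ⟨⟨0, hn⟩⟩
    exact ⟨fun _ => ∅, fun _ => isPrimeFilter_empty, (Set.iInter_const _).symm⟩
  obtain ⟨Y, hY, hYn, hYc⟩ := hFc.isNPrimeUpset_of_compl.exists_minimal (Y₀ := {f})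
    fun b hb => hF.1 hf (hb (by simp))
  obtain ⟨P, hP, hPY⟩ := exists_fin_iInter_eq (by simpa using hYn) fun w : Y =>
    ⟨isLatFilter_exchangeSet hF, isPrimeUpset_exchangeSet hF hY hYc w.2⟩
  exact ⟨P, hP, by rw [hPY, iInter_exchangeSet hF hY hYc]⟩

section DMHom

variable {L : Type*} [DeMorgan L]

theorem DeMorgan.dneg_inf (x y : L) : ∼(x ⊓ y) = ∼x ⊔ ∼y := by
  rw [← DeMorgan.dneg_dneg (∼x ⊔ ∼y), DeMorgan.dneg_sup, DeMorgan.dneg_dneg, DeMorgan.dneg_dneg]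

theorem dneg_bool_prod (p : Bool × Bool) : ∼p = (!p.2, !p.1) := rfl

open Classical in
noncomputable def toDM₁ (P : Set L) (x : L) : Bool × Bool :=
  (decide (x ∈ P), decide (∼x ∉ P))

@[simp]
theorem toDM₁_fst_eq_true {P : Set L} {x : L} : (toDM₁ P x).1 = true ↔ x ∈ P := by
  simp [toDM₁]

@[simp]
theorem toDM₁_snd_eq_true {P : Set L} {x : L} : (toDM₁ P x).2 = true ↔ ∼x ∉ P := by
  simp [toDM₁]

theorem isDMHom_toDM₁ {P : Set L} (hP : IsPrimeFilter P) : IsDMHom (toDM₁ P) := by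
  refine ⟨fun x y => ?_, fun x y => ?_, fun x => ?_⟩ <;>
    refine Prod.ext (Bool.eq_iff_iff.mpr ?_) (Bool.eq_iff_iff.mpr ?_) <;>
    simp [hP.1.inf_mem_iff, hP.sup_mem_iff, DeMorgan.dneg_inf, DeMorgan.dneg_sup,
      DeMorgan.dneg_dneg, dneg_bool_prod, Bool.eq_false_iff, imp_iff_not_or]

theorem IsDMHom.pi {ι : Type*} {f : ι → L → Bool × Bool} (hf : ∀ i, IsDMHom (f i)) :
    IsDMHom fun x i => f i x :=
  ⟨fun x y => funext fun i => (hf i).1 x y, fun x y => funext fun i => (hf i).2.1 x y,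
    fun x => funext fun i => (hf i).2.2 x⟩

theorem IsDMHom.isPrimeFilter_fst {ι : Type*} {h : L → ι → Bool × Bool} (hh : IsDMHom h) (i : ι) :
    IsPrimeFilter {x | (h x i).1 = true} :=
  isPrimeFilter_setOf_eq_true (fun x y => by rw [hh.1]; rfl) (fun x y => by rw [hh.2.1]; rfl)

end DMHom

theorem statement13_general {L : Type*} [DeMorgan L] (n : ℕ) (hn : 1 ≤ n)
    (F : Set L) :
    (IsLatFilter F ∧ IsNIdeal n Fᶜ) ↔
      ∃ h : L → (Fin n → Bool × Bool), IsDMHom h ∧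
        F = {x : L | ∀ i : Fin n, (h x i).1 = true} := by
  constructor
  · rintro ⟨hF, hFc⟩
    obtain ⟨P, hP, rfl⟩ := exists_iInter_eq_of_isNIdeal_compl hF hn hFc
    refine ⟨fun x i => toDM₁ (P i) x, IsDMHom.pi fun i => isDMHom_toDM₁ (hP i), ?_⟩
    ext x
    simp
  · rintro ⟨h, hh, rfl⟩
    have : Nonempty (Fin n) := ⟨⟨0, hn⟩⟩
    have hF : {x | ∀ i, (h x i).1 = true} = ⋂ i, {x | (h x i).1 = true} := by ext; simp
    rw [hF]
    exact ⟨isLatFilter_iInter fun i => (hh.isPrimeFilter_fst i).1,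
      isNIdeal_compl_iInter (by simp) hh.isPrimeFilter_fst⟩

/-- `n`-prime filters (filters whose complement is an `n`-ideal) are precisely
the preimages of the designated set of the direct power `(DM₁)ⁿ` under De Morgan
homomorphisms. -/
theorem statement13 {L : Type*} [DeMorgan L] [Nonempty L] (n : ℕ) (hn : 1 ≤ n)
    (F : Set L) :
    (IsLatFilter F ∧ IsNIdeal n Fᶜ) ↔
      ∃ h : L → (Fin n → Bool × Bool), IsDMHom h ∧
        F = {x : L | ∀ i : Fin n, (h x i).1 = true} :=
  statement13_general n hn F
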